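/- Consider e_{k+1} = Ã e_k + Δf_k + D₁ w_k − L D₂ v_k where x_k ∈ X (convex), Δf_k = f(x_k) − f(x̂_k), and by the mean value theorem Δf_k = J_k e_k for some J_k in the interval matrix [J̲, J̄]. Then e_{k+1} ∈ (Ã + [J̲, J̄])·{e_k} ⊕ D₁·⟨0, M_w⟩ ⊕ (−LD₂)·⟨0, M_v⟩; in particular, if e_k ∈ ⟨0, M_{k}⟩ then e_{k+1} ∈ ⟨0, [ÃM_k, T_k, D₁M_w, LD₂M_v]⟩ where T_k = [D^c, D^s] is obtained from the zonotope inclusion of the interval matrix product [J̲,J̄]·M_k. -/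

import Mathlib

/-!
Writing `e_k = M_k ξ` with `ξ` in the unit box, every term of the error dynamics is the linear
image of a zonotope, and sums of zonotopes are zonotopes whose generators are concatenated.
The only term that is not a fixed matrix times `ξ` is `J_k M_k ξ`, where `J_k M_k` is only known
to lie in the interval matrix `[N̲, N̄]`: splitting it as midpoint plus deviation, the midpoint
part is `½(N̲ + N̄) ξ` and the deviation part is bounded row by row by the row sums of the radius
`½(N̄ - N̲)`, so it lies in the box spanned by the diagonal matrix of those row sums.
-/

open Matrix

def zonotope {n ι : Type*} [Fintype ι] (p : n → ℝ) (M : Matrix n ι ℝ) :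
    Set (n → ℝ) :=
  {x | ∃ ξ : ι → ℝ, (∀ j, |ξ j| ≤ 1) ∧ x = p + M.mulVec ξ}

/-- Generators `[D^c, D^s]` of the zonotope enclosing `{N ξ : N ∈ [Nl, Nu], |ξ| ≤ 1}`. -/
noncomputable def zonotopeInclusion {n m : Type*} [Fintype m] [DecidableEq n]
    (Nl Nu : Matrix n m ℝ) : Matrix n (m ⊕ n) ℝ :=
  fromCols ((1 / 2 : ℝ) • (Nl + Nu)) (diagonal fun i => ∑ j, ((1 / 2 : ℝ) • (Nu - Nl)) i j)

section Zonotope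

variable {n ι κ μ : Type*} [Fintype ι] [Fintype κ] [Fintype μ]

theorem mulVec_mem_zonotope {m : Type*} [Fintype n] (A : Matrix m n ℝ) {p x : n → ℝ}
    {M : Matrix n ι ℝ} (hx : x ∈ zonotope p M) : A *ᵥ x ∈ zonotope (A *ᵥ p) (A * M) := by
  obtain ⟨ξ, hξ, rfl⟩ := hx
  exact ⟨ξ, hξ, by rw [mulVec_add, mulVec_mulVec]⟩

theorem neg_mem_zonotope {p x : n → ℝ} {M : Matrix n ι ℝ} (hx : x ∈ zonotope p M) :
    -x ∈ zonotope (-p) M := by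
  obtain ⟨ξ, hξ, rfl⟩ := hx
  exact ⟨-ξ, fun j => by simpa using hξ j, by rw [mulVec_neg, neg_add]⟩

theorem add_mem_zonotope_fromCols {p q x y : n → ℝ} {M : Matrix n ι ℝ} {N : Matrix n κ ℝ}
    (hx : x ∈ zonotope p M) (hy : y ∈ zonotope q N) :
    x + y ∈ zonotope (p + q) (fromCols M N) := by
  obtain ⟨ξ, hξ, rfl⟩ := hx
  obtain ⟨η, hη, rfl⟩ := hy
  refine ⟨Sum.elim ξ η, ?_, ?_⟩
  · rintro (j | j)
    exacts [hξ j, hη j]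
  · rw [fromCols_mulVec_sumElim]
    abel

theorem zonotope_fromCols_fromCols_subset (p : n → ℝ) (A : Matrix n ι ℝ) (B : Matrix n κ ℝ)
    (C : Matrix n μ ℝ) :
    zonotope p (fromCols (fromCols A B) C) ⊆ zonotope p (fromCols A (fromCols B C)) := by
  rintro x ⟨ξ, hξ, rfl⟩
  refine ⟨ξ ∘ (Equiv.sumAssoc ι κ μ).symm, fun j => hξ _, ?_⟩
  simp only [fromCols_mulVec, add_assoc]
  rfl

theorem mem_zonotope_diagonal_of_abs_le [Fintype n] [DecidableEq n] {d x : n → ℝ}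
    (h : ∀ i, |x i| ≤ d i) : x ∈ zonotope 0 (diagonal d) := by
  refine ⟨fun i => x i / d i, fun i => ?_, funext fun i => ?_⟩
  · rcases (abs_nonneg _).trans (h i) |>.eq_or_lt with hd | hd
    · simp [← hd]
    · rw [abs_div, abs_of_pos hd, div_le_one hd]
      exact h i
  · rw [Pi.add_apply, Pi.zero_apply, zero_add, mulVec_diagonal]
    rcases eq_or_ne (d i) 0 with hd | hd
    · simpa [hd] using h i
    · rw [mul_div_cancel₀ _ hd]

end Zonotope

theorem abs_mulVec_le_sum {n m : Type*} [Fintype m] {A R : Matrix n m ℝ} {ξ : m → ℝ}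
    (hA : ∀ i j, |A i j| ≤ R i j) (hξ : ∀ j, |ξ j| ≤ 1) (i : n) :
    |(A *ᵥ ξ) i| ≤ ∑ j, R i j :=
  calc |∑ j, A i j * ξ j| ≤ ∑ j, |A i j * ξ j| := Finset.abs_sum_le_sum_abs _ _
    _ ≤ ∑ j, R i j := Finset.sum_le_sum fun j _ => by
        rw [abs_mul]
        simpa using mul_le_mul (hA i j) (hξ j) (abs_nonneg _) ((abs_nonneg _).trans (hA i j))

theorem zonotope_subset_zonotopeInclusion {n m : Type*} [Fintype n] [Fintype m] [DecidableEq n]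
    {N Nl Nu : Matrix n m ℝ} (hN : ∀ i j, Nl i j ≤ N i j ∧ N i j ≤ Nu i j) (p : n → ℝ) :
    zonotope p N ⊆ zonotope p (zonotopeInclusion Nl Nu) := by
  rintro x ⟨ξ, hξ, rfl⟩
  set C := (1 / 2 : ℝ) • (Nl + Nu)
  have hdev : ∀ i j, |(N - C) i j| ≤ ((1 / 2 : ℝ) • (Nu - Nl)) i j := fun i j => by
    simp only [C, Matrix.sub_apply, Matrix.smul_apply, Matrix.add_apply, smul_eq_mul, abs_le]
    constructor <;> linarith [hN i j]
  obtain ⟨η, hη, hη_eq⟩ := mem_zonotope_diagonal_of_abs_le (abs_mulVec_le_sum hdev hξ)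
  have hsplit := add_mem_zonotope_fromCols (p := p) (M := C) ⟨ξ, hξ, rfl⟩ ⟨η, hη, hη_eq⟩
  rwa [add_zero, add_assoc, ← add_mulVec, add_sub_cancel] at hsplit

/-- Propagation of the error zonotope through the error dynamics
`e_{k+1} = Ã e_k + Δf_k + D₁ w_k - L D₂ v_k` with `Δf_k = J_k e_k`, `J_k ∈ [J̲, J̄]`:
`e_{k+1}` lies in `(Ã + [J̲,J̄])·{e_k} ⊕ D₁⟨0,M_w⟩ ⊕ (-LD₂)⟨0,M_v⟩`, and if
`e_k ∈ ⟨0,M_k⟩` then `e_{k+1} ∈ ⟨0, [ÃM_k, T_k, D₁M_w, LD₂M_v]⟩` with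
`T_k = [D^c D^s]` from the zonotope inclusion of `[J̲,J̄]·M_k`. -/
theorem stmt18 {n m mw mv dw dv : ℕ}
    (Atil : Matrix (Fin n) (Fin n) ℝ) (Mk : Matrix (Fin n) (Fin m) ℝ)
    (Jl Ju Jk : Matrix (Fin n) (Fin n) ℝ)
    (hJ : ∀ i j, Jl i j ≤ Jk i j ∧ Jk i j ≤ Ju i j)
    (D₁ : Matrix (Fin n) (Fin dw) ℝ) (L : Matrix (Fin n) (Fin dv) ℝ)
    (D₂ : Matrix (Fin dv) (Fin dv) ℝ)
    (Mw : Matrix (Fin dw) (Fin mw) ℝ) (Mv : Matrix (Fin dv) (Fin mv) ℝ)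
    -- `[Nl, Nu]` is the interval matrix product `[J̲, J̄]·M_k`
    (Nl Nu : Matrix (Fin n) (Fin m) ℝ)
    (hN : ∀ K : Matrix (Fin n) (Fin n) ℝ, (∀ i j, Jl i j ≤ K i j ∧ K i j ≤ Ju i j) →
      ∀ i j, Nl i j ≤ (K * Mk) i j ∧ (K * Mk) i j ≤ Nu i j)
    (ek enext Δf : Fin n → ℝ) (w : Fin dw → ℝ) (v : Fin dv → ℝ)
    (hek : ek ∈ zonotope 0 Mk) (hw : w ∈ zonotope 0 Mw) (hv : v ∈ zonotope 0 Mv)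
    (hΔf : Δf = Jk.mulVec ek)
    (hstep : enext = Atil.mulVec ek + Δf + D₁.mulVec w - (L * D₂).mulVec v) :
    (∃ J' : Matrix (Fin n) (Fin n) ℝ, (∀ i j, Jl i j ≤ J' i j ∧ J' i j ≤ Ju i j) ∧
      ∃ w' ∈ zonotope (0 : Fin dw → ℝ) Mw, ∃ v' ∈ zonotope (0 : Fin dv → ℝ) Mv,
        enext = (Atil + J').mulVec ek + D₁.mulVec w' - (L * D₂).mulVec v') ∧
    enext ∈ zonotope (0 : Fin n → ℝ)
      (Matrix.fromCols (Atil * Mk)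
        (Matrix.fromCols ((1 / 2 : ℝ) • (Nl + Nu))
          (Matrix.fromCols
            (Matrix.diagonal fun i => ∑ j, ((1 / 2 : ℝ) • (Nu - Nl)) i j)
            (Matrix.fromCols (D₁ * Mw) (L * D₂ * Mv))))) := by
  refine ⟨⟨Jk, hJ, w, hw, v, hv, by rw [hstep, hΔf, add_mulVec]⟩, ?_⟩
  have hAe := mulVec_mem_zonotope Atil hek
  have hΔf_mem : Δf ∈ zonotope 0 (zonotopeInclusion Nl Nu) := by
    have hJe := mulVec_mem_zonotope Jk hek
    rw [mulVec_zero, ← hΔf] at hJe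
    exact zonotope_subset_zonotopeInclusion (hN Jk hJ) 0 hJe
  have hDw := mulVec_mem_zonotope D₁ hw
  have hLv := neg_mem_zonotope (mulVec_mem_zonotope (L * D₂) hv)
  rw [mulVec_zero] at hAe hDw
  rw [mulVec_zero, neg_zero] at hLv
  have hsum := add_mem_zonotope_fromCols hAe <| zonotope_fromCols_fromCols_subset _ _ _ _ <|
    add_mem_zonotope_fromCols hΔf_mem (add_mem_zonotope_fromCols hDw hLv)
  rw [add_zero, add_zero, add_zero] at hsum
  convert hsum using 1
  rw [hstep]
  abel
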